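/- Let k ≥ 1, let a_k = exp(−k(k+1)/2), let ψ : ℝ → ℝ be a continuous nonnegative function vanishing outside (a_k, a_{k−1}) with ∫_ℝ ψ = 1 and ψ(z) ≤ 2/(k·z) on (a_k, a_{k−1}), and let φ(z) = ∫₀^{|z|} ∫₀^y ψ(x) dx dy. Then for all a ≥ 0, all c ∈ [0,1], and all x, y ∈ [0, c], one has φ''(x − y) · (√(a·x·(c−x)) − √(a·y·(c−y)))² ≤ 4a/k. -/

import Mathlib

open MeasureTheory intervalIntegral

noncomputable def aSeq (k : ℕ) : ℝ := Real.exp (-((k : ℝ) * ((k : ℝ) + 1)) / 2)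

lemma sqrt_sub_sq_le (u v : ℝ) (hu : 0 ≤ u) (hv : 0 ≤ v) :
    (Real.sqrt u - Real.sqrt v) ^ 2 ≤ |u - v| := by
  have h1 := Real.sq_sqrt hu
  have h2 := Real.sq_sqrt hv
  have h3 := Real.sqrt_nonneg u
  have h4 := Real.sqrt_nonneg v
  rcases le_total u v with h | h
  · rw [abs_of_nonpos (by linarith)]
    have h5 : Real.sqrt u ≤ Real.sqrt v := Real.sqrt_le_sqrt h
    nlinarith [mul_nonneg h3 h4]
  · rw [abs_of_nonneg (by linarith)]
    have h5 : Real.sqrt v ≤ Real.sqrt u := Real.sqrt_le_sqrt h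
    nlinarith [mul_nonneg h3 h4]

lemma second_deriv_phi (k : ℕ) (ψ : ℝ → ℝ) (hcont : Continuous ψ)
    (hsupp : ∀ z, z ∉ Set.Ioo (aSeq k) (aSeq (k - 1)) → ψ z = 0) (z₀ : ℝ) :
    deriv (deriv (fun z : ℝ => ∫ u in (0:ℝ)..|z|, ∫ v in (0:ℝ)..u, ψ v)) z₀
      = ψ z₀ + ψ (-z₀) := by
  have hak : 0 < aSeq k := Real.exp_pos _
  set F : ℝ → ℝ := fun u => ∫ v in (0:ℝ)..u, ψ v with hF
  have hFd : ∀ u, HasDerivAt F (ψ u) u := fun u =>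
    (hcont.integral_hasStrictDerivAt 0 u).hasDerivAt
  have hFcont : Continuous F :=
    continuous_iff_continuousAt.2 fun u => (hFd u).continuousAt
  have hF0 : ∀ u ≤ 0, F u = 0 := by
    intro u hu
    have : ∫ v in (0:ℝ)..u, ψ v = ∫ v in (0:ℝ)..u, (0:ℝ) := by
      apply intervalIntegral.integral_congr
      intro v hv
      apply hsupp
      rw [Set.uIcc_of_ge hu] at hv
      intro hmem
      exact absurd hmem.1 (not_lt.2 (hv.2.trans hak.le))
    simpa using this
  set G : ℝ → ℝ := fun z => ∫ u in (0:ℝ)..z, F u with hG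
  have hGd : ∀ z, HasDerivAt G (F z) z := fun z =>
    (hFcont.integral_hasStrictDerivAt 0 z).hasDerivAt
  have hG0 : ∀ z ≤ 0, G z = 0 := by
    intro z hz
    have : ∫ u in (0:ℝ)..z, F u = ∫ u in (0:ℝ)..z, (0:ℝ) := by
      apply intervalIntegral.integral_congr
      intro u hu
      rw [Set.uIcc_of_ge hz] at hu
      exact hF0 u hu.2
    simpa using this
  have hphi : (fun z : ℝ => ∫ u in (0:ℝ)..|z|, ∫ v in (0:ℝ)..u, ψ v)
      = fun z => G z + G (-z) := by
    funext z
    rcases le_total 0 z with hz | hz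
    · rw [abs_of_nonneg hz, hG0 (-z) (by linarith), add_zero]
    · rw [abs_of_nonpos hz, hG0 z hz, zero_add]
  rw [hphi]
  have hd1 : deriv (fun z : ℝ => G z + G (-z)) = fun z => F z - F (-z) := by
    funext z
    have h1 : HasDerivAt (fun z : ℝ => G (-z)) (-F (-z)) z := by
      simpa [Function.comp_def] using (hGd (-z)).comp z (hasDerivAt_neg z)
    have := (hGd z).add h1
    simpa [sub_eq_add_neg, Pi.add_def] using this.deriv
  rw [hd1]
  have h2 : HasDerivAt (fun z : ℝ => F (-z)) (-ψ (-z₀)) z₀ := by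
    simpa [Function.comp_def] using (hFd (-z₀)).comp z₀ (hasDerivAt_neg z₀)
  have := (hFd z₀).sub h2
  simpa [sub_eq_add_neg, Pi.add_def, Pi.neg_def] using this.deriv

/-- With `ψ` a stage-k mollifier and `φ(z) = ∫₀^{|z|} ∫₀^y ψ(x) dx dy`,
for all `a ≥ 0`, `c ∈ [0,1]` and `x, y ∈ [0,c]`:
`φ''(x − y) · (√(a·x·(c−x)) − √(a·y·(c−y)))² ≤ 4a/k`. -/
theorem stmt8 (k : ℕ) (hk : 1 ≤ k) (ψ : ℝ → ℝ)
    (hcont : Continuous ψ) (hnonneg : ∀ z, 0 ≤ ψ z)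
    (hsupp : ∀ z, z ∉ Set.Ioo (aSeq k) (aSeq (k - 1)) → ψ z = 0)
    (hint : (∫ x, ψ x) = 1)
    (hbound : ∀ z ∈ Set.Ioo (aSeq k) (aSeq (k - 1)), ψ z ≤ 2 / ((k : ℝ) * z))
    (a c x y : ℝ) (ha : 0 ≤ a) (hc : c ∈ Set.Icc (0 : ℝ) 1)
    (hx : x ∈ Set.Icc (0 : ℝ) c) (hy : y ∈ Set.Icc (0 : ℝ) c) :
    deriv (deriv (fun z : ℝ => ∫ u in (0:ℝ)..|z|, ∫ v in (0:ℝ)..u, ψ v)) (x - y)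
        * (Real.sqrt (a * x * (c - x)) - Real.sqrt (a * y * (c - y))) ^ 2
      ≤ 4 * a / (k : ℝ) := by
  have hak : 0 < aSeq k := Real.exp_pos _
  have hkpos : (0:ℝ) < k := by exact_mod_cast hk
  rw [second_deriv_phi k ψ hcont hsupp (x - y)]
  obtain ⟨hx0, hxc⟩ := hx
  obtain ⟨hy0, hyc⟩ := hy
  obtain ⟨hc0, hc1⟩ := hc
  set S := (Real.sqrt (a * x * (c - x)) - Real.sqrt (a * y * (c - y))) ^ 2 with hS
  have hSnn : 0 ≤ S := sq_nonneg _
  have hSle : S ≤ a * |x - y| := by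
    have h1 : S ≤ |a * x * (c - x) - a * y * (c - y)| :=
      sqrt_sub_sq_le _ _ (mul_nonneg (mul_nonneg ha hx0) (by linarith))
        (mul_nonneg (mul_nonneg ha hy0) (by linarith))
    have h2 : a * x * (c - x) - a * y * (c - y) = a * (x - y) * (c - x - y) := by ring
    rw [h2, abs_mul, abs_mul, abs_of_nonneg ha] at h1
    have h3 : |c - x - y| ≤ 1 := by
      rw [abs_le]; constructor <;> linarith
    calc S ≤ a * |x - y| * |c - x - y| := h1
      _ ≤ a * |x - y| * 1 := by
          apply mul_le_mul_of_nonneg_left h3 (by positivity)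
      _ = a * |x - y| := by ring
  by_cases h1 : (x - y) ∈ Set.Ioo (aSeq k) (aSeq (k - 1))
  · have hz : 0 < x - y := hak.trans h1.1
    have hneg : ψ (-(x - y)) = 0 := hsupp _ (by
      intro hmem
      exact absurd (hmem.1) (by linarith))
    rw [hneg, add_zero]
    have hb := hbound _ h1
    have habs : |x - y| = x - y := abs_of_pos hz
    calc ψ (x - y) * S ≤ (2 / ((k : ℝ) * (x - y))) * (a * (x - y)) := by
          exact mul_le_mul hb (habs ▸ hSle) hSnn
            (div_nonneg (by norm_num) (by nlinarith))
      _ = 2 * a / k := by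
          have hz' : x - y ≠ 0 := ne_of_gt hz
          field_simp
      _ ≤ 4 * a / k := by gcongr; linarith
  · by_cases h2 : (-(x - y)) ∈ Set.Ioo (aSeq k) (aSeq (k - 1))
    · have hz : x - y < 0 := by have := hak.trans h2.1; linarith
      have hpos : ψ (x - y) = 0 := hsupp _ (by
        intro hmem
        exact absurd (hmem.1) (by linarith))
      rw [hpos, zero_add]
      have hb := hbound _ h2
      have habs : |x - y| = -(x - y) := abs_of_neg hz
      calc ψ (-(x - y)) * S ≤ (2 / ((k : ℝ) * (-(x - y)))) * (a * (-(x - y))) := by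
            exact mul_le_mul hb (habs ▸ hSle) hSnn
              (div_nonneg (by norm_num) (by nlinarith))
        _ = 2 * a / k := by
            have ht : (0:ℝ) < -(x - y) := by linarith
            have heq : 2 / ((k:ℝ) * -(x - y)) * (a * -(x - y))
                = (-(x - y) * (2 * a)) / (-(x - y) * (k:ℝ)) := by ring
            rw [heq, mul_div_mul_left _ _ (ne_of_gt ht)]
        _ ≤ 4 * a / k := by gcongr; linarith
    · rw [hsupp _ h1, hsupp _ h2, add_zero, zero_mul]
      positivity
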